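/- If σ is a satisfying assignment of the goal-restricted theory T_G(S,F), then the extracted abstract action set A_σ is sound relative to S and complete relative to the set of marked (goal-relevant) transitions of S. -/

import Mathlib

inductive Change
  | inc | dec | same
deriving DecidableEq

def delta (v v' : ℕ) : Change := if v < v' then .inc else if v' < v then .dec else .same

/-- Qualitative (boolean) value of feature `f` at state `s`: whether its value is 0. -/
def qv {State F : Type} (val : F → State → ℕ) (f : F) (s : State) : Bool :=
  decide (val f s = 0)

def Expanded {State : Type} (S : Set (State × State)) (s : State) : Prop := ∃ s', (s, s') ∈ S

structure Act (F : Type) where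
  pre : F → Option Bool
  eff : F → Option Change

/-- The abstract action `a` is defined only over the features in `sel`. -/
def Over {F : Type} (sel : F → Prop) (a : Act F) : Prop :=
  ∀ f, ¬ sel f → a.pre f = none ∧ a.eff f = none

/-- `a` is applicable in the abstract state of `s`. -/
def App {State F : Type} (val : F → State → ℕ) (a : Act F) (s : State) : Prop :=
  ∀ (f : F) (b : Bool), a.pre f = some b → qv val f s = b

/-- `a` is applicable at `s` and has the same qualitative effects over the selected
features as the transition (s,s'). -/
def Matches {State F : Type} (val : F → State → ℕ) (sel : F → Prop) (a : Act F)
    (s s' : State) : Prop :=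
  App val a s ∧ ∀ f, sel f → (a.eff f).getD .same = delta (val f s) (val f s')

def SoundRel {State F : Type} (val : F → State → ℕ) (S : Set (State × State))
    (sel : F → Prop) (A : Set (Act F)) : Prop :=
  ∀ a ∈ A, ∀ s, Expanded S s → App val a s → ∃ s', (s, s') ∈ S ∧ Matches val sel a s s'

def CompleteRel {State F : Type} (val : F → State → ℕ) (S : Set (State × State))
    (sel : F → Prop) (A : Set (Act F)) : Prop :=
  ∀ p ∈ S, ∃ a ∈ A, Matches val sel a p.1 p.2

/-- Satisfaction of the theory T(S,F) by an assignment (sel, d1, d2):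
clause families (1)-(4). -/
def SatT {State F : Type} (S : Set (State × State)) (goal : State → Prop)
    (val : F → State → ℕ) (sel : F → Prop) (d1 : State → State → Prop)
    (d2 : State → State → State → State → Prop) : Prop :=
  (∀ s t, Expanded S s → Expanded S t →
      (d1 s t ↔ ∃ f, sel f ∧ qv val f s ≠ qv val f t)) ∧
  (∀ s s' t t', (s, s') ∈ S → (t, t') ∈ S →
      (d2 s s' t t' ↔ ∃ f, sel f ∧ qv val f s = qv val f t ∧
          delta (val f s) (val f s') ≠ delta (val f t) (val f t'))) ∧
  (∀ s s' t, (s, s') ∈ S → Expanded S t → ¬ d1 s t →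
      ∃ t', (t, t') ∈ S ∧ ¬ d2 s s' t t') ∧
  (∀ s t, Expanded S s → Expanded S t → (goal s ↔ ¬ goal t) → d1 s t)

open scoped Classical in
/-- The abstract action extracted from transition (s,s') over the selected features. -/
noncomputable def extract {State F : Type} (val : F → State → ℕ) (sel : F → Prop)
    (s s' : State) : Act F :=
  { pre := fun f => if sel f then some (qv val f s) else none,
    eff := fun f => if sel f then some (delta (val f s) (val f s')) else none }

/-- Satisfaction of the goal-restricted theory T_G(S,F): clauses (1)-(3) range over
the marked transitions M and their source states, while t and (t,t') range over S. -/
def SatTG {State F : Type} (S M : Set (State × State)) (goal : State → Prop)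
    (val : F → State → ℕ) (sel : F → Prop) (d1 : State → State → Prop)
    (d2 : State → State → State → State → Prop) : Prop :=
  (∀ s t, Expanded M s → Expanded S t →
      (d1 s t ↔ ∃ f, sel f ∧ qv val f s ≠ qv val f t)) ∧
  (∀ s s' t t', (s, s') ∈ M → (t, t') ∈ S →
      (d2 s s' t t' ↔ ∃ f, sel f ∧ qv val f s = qv val f t ∧
          delta (val f s) (val f s') ≠ delta (val f t) (val f t'))) ∧
  (∀ s s' t, (s, s') ∈ M → Expanded S t → ¬ d1 s t →
      ∃ t', (t, t') ∈ S ∧ ¬ d2 s s' t t') ∧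
  (∀ s t, Expanded S s → Expanded S t → (goal s ↔ ¬ goal t) → d1 s t)

section Extract

variable {State F : Type} {val : F → State → ℕ} {sel : F → Prop} {f : F} {s s' t t' : State}

theorem app_extract_iff :
    App val (extract val sel s s') t ↔ ∀ f, sel f → qv val f t = qv val f s := by
  constructor
  · intro happ f hf
    exact happ f _ (by simp [extract, hf])
  · intro hqv f b hb
    by_cases hf : sel f
    · simp only [extract, hf, if_true, Option.some.injEq] at hb
      exact hb ▸ hqv f hf
    · simp [extract, hf] at hb

theorem eff_extract_getD (hf : sel f) :
    ((extract val sel s s').eff f).getD .same = delta (val f s) (val f s') := by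
  simp [extract, hf]

theorem matches_extract_iff :
    Matches val sel (extract val sel s s') t t' ↔
      (∀ f, sel f → qv val f t = qv val f s) ∧
        ∀ f, sel f → delta (val f s) (val f s') = delta (val f t) (val f t') := by
  refine and_congr app_extract_iff (forall_congr' fun f => ?_)
  exact imp_congr_right fun hf => by rw [eff_extract_getD hf]

theorem matches_extract_self : Matches val sel (extract val sel s s') s s' :=
  matches_extract_iff.mpr ⟨fun _ _ => rfl, fun _ _ => rfl⟩

theorem completeRel_extract (M : Set (State × State)) :
    CompleteRel val M sel {a | ∃ q ∈ M, a = extract val sel q.1 q.2} :=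
  fun p hp => ⟨_, ⟨p, hp, rfl⟩, matches_extract_self⟩

end Extract

namespace SatTG

variable {State F : Type} {S M : Set (State × State)} {goal : State → Prop}
  {val : F → State → ℕ} {sel : F → Prop} {d1 : State → State → Prop}
  {d2 : State → State → State → State → Prop} {s s' t t' : State}

theorem not_d1_of_qv_eq (h : SatTG S M goal val sel d1 d2) (hs : Expanded M s)
    (ht : Expanded S t) (hqv : ∀ f, sel f → qv val f t = qv val f s) : ¬ d1 s t := by
  rw [h.1 s t hs ht]
  rintro ⟨f, hf, hne⟩
  exact hne (hqv f hf).symm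

theorem delta_eq_of_not_d2 (h : SatTG S M goal val sel d1 d2) (hss' : (s, s') ∈ M)
    (htt' : (t, t') ∈ S) (hqv : ∀ f, sel f → qv val f t = qv val f s)
    (hd2 : ¬ d2 s s' t t') (f : F) (hf : sel f) :
    delta (val f s) (val f s') = delta (val f t) (val f t') := by
  by_contra hne
  exact hd2 ((h.2.1 s s' t t' hss' htt').mpr ⟨f, hf, (hqv f hf).symm, hne⟩)

/-- The action extracted from `(s, s')` is applicable at `t` iff `¬ d1 s t` (clause (1)); clause (3)
then yields `t'` with `¬ d2 s s' t t'`, which by clause (2) means the effects agree. -/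
theorem soundRel_extract (h : SatTG S M goal val sel d1 d2) :
    SoundRel val S sel {a | ∃ p ∈ M, a = extract val sel p.1 p.2} := by
  rintro _ ⟨⟨s, s'⟩, hss', rfl⟩ t ht happ
  have hqv := app_extract_iff.mp happ
  obtain ⟨t', htt', hd2⟩ := h.2.2.1 s s' t hss' ht (h.not_d1_of_qv_eq ⟨s', hss'⟩ ht hqv)
  exact ⟨t', htt', matches_extract_iff.mpr ⟨hqv, h.delta_eq_of_not_d2 hss' htt' hqv hd2⟩⟩

end SatTG

theorem stmt8_general {State F : Type} (S M : Set (State × State))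
    (goal : State → Prop) (val : F → State → ℕ) (sel : F → Prop)
    (d1 : State → State → Prop) (d2 : State → State → State → State → Prop)
    (h : SatTG S M goal val sel d1 d2) :
    SoundRel val S sel {a | ∃ p ∈ M, a = extract val sel p.1 p.2} ∧
    (∀ p ∈ M, ∃ a ∈ {a | ∃ q ∈ M, a = extract val sel q.1 q.2},
      Matches val sel a p.1 p.2) :=
  ⟨h.soundRel_extract, completeRel_extract M⟩

/-- From a satisfying assignment of T_G(S,F), the abstract actions
extracted from the marked transitions are sound relative to S and complete relative
to the marked transitions M. -/
theorem stmt8 {State F : Type} (S M : Set (State × State)) (hM : M ⊆ S)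
    (goal : State → Prop) (val : F → State → ℕ) (sel : F → Prop)
    (d1 : State → State → Prop) (d2 : State → State → State → State → Prop)
    (h : SatTG S M goal val sel d1 d2) :
    SoundRel val S sel {a | ∃ p ∈ M, a = extract val sel p.1 p.2} ∧
    (∀ p ∈ M, ∃ a ∈ {a | ∃ q ∈ M, a = extract val sel q.1 q.2},
      Matches val sel a p.1 p.2) :=
  stmt8_general S M goal val sel d1 d2 h
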